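/- arXiv:1705.02372 — 3 statements merged into one kernel-verified Lean document; each statement's English description precedes it below -/
import Mathlib

section
/- For any matrices Z₁, Z₂ ∈ R^{n×k}, define dist(Z₁, Z₂) = min over orthogonal R ∈ O(k) of ‖Z₁ - Z₂ R‖_F. Then dist(Z₁, Z₂)² ≤ (1 / (2(√2 - 1) σ_k(Z₁)²)) · ‖Z₁ Z₁^T - Z₂ Z₂^T‖_F², where σ_k(Z₁) is the k-th (smallest) singular value of Z₁, assumed positive. -/
/-!
Rotate `Z₂` by the orthogonal factor `R` of a polar decomposition of `Z₁ᵀ Z₂`, so that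
`Z₁ᵀ (Z₂ R)` is positive semidefinite, and write `Z₂ R = Z₁ + Δ`. With `P = ΔᵀΔ`, `Q = Z₁ᵀZ₁`
and the symmetric matrix `S = Z₁ᵀΔ`,
`‖Z₁Z₁ᵀ - Z₂Z₂ᵀ‖² = ‖P + √2 S‖² + (4 - 2√2) tr((Q + S) P) + (2√2 - 2) tr(Q P)`.
The middle term is nonnegative because `Q + S = Z₁ᵀ Z₂ R` and `P` are positive semidefinite, and
`tr(Q P) ≥ σ² tr P = σ² ‖Z₁ - Z₂ R‖²` because `Q - σ²` is.
-/

open Matrix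

/-- Squared Frobenius norm of a real matrix. -/
noncomputable def frobSq {m n : ℕ} (M : Matrix (Fin m) (Fin n) ℝ) : ℝ :=
  ∑ i, ∑ j, (M i j) ^ 2

open scoped MatrixOrder ComplexOrder

namespace Matrix

section RCLike

variable {𝕜 n : Type*} [RCLike 𝕜] [Fintype n]

theorem isCompact_unitaryGroup [DecidableEq n] :
    IsCompact (unitaryGroup n 𝕜 : Set (Matrix n n 𝕜)) := by
  have hclosed : IsClosed (unitaryGroup n 𝕜 : Set (Matrix n n 𝕜)) := isClosed_unitary
  open scoped Matrix.Norms.Elementwise in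
  exact Metric.isCompact_of_isClosed_isBounded hclosed <|
    (Metric.isBounded_closedBall (x := 0) (r := 1)).subset fun U hU =>
      mem_closedBall_zero_iff.mpr (entrywise_sup_norm_bound_of_unitary hU)

theorem isClosed_setOf_posSemidef : IsClosed {A : Matrix n n 𝕜 | A.PosSemidef} := by
  simp only [posSemidef_iff_dotProduct_mulVec, Set.ofPred_and, Set.ofPred_forall]
  refine (isClosed_eq (by fun_prop) continuous_id).inter (isClosed_iInter fun x => ?_)
  exact isClosed_le continuous_const (by fun_prop)

theorem PosSemidef.trace_mul_nonneg {A B : Matrix n n 𝕜} (hA : A.PosSemidef)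
    (hB : B.PosSemidef) : 0 ≤ (A * B).trace := by
  classical
  have hX : (CFC.sqrt B).PosSemidef := (CFC.sqrt_nonneg B).posSemidef
  have hXAX := hA.mul_mul_conjTranspose_same (CFC.sqrt B)
  rw [hX.isHermitian.eq] at hXAX
  rw [← CFC.sqrt_mul_sqrt_self B hB.nonneg, ← Matrix.mul_assoc, trace_mul_comm, ← Matrix.mul_assoc]
  exact hXAX.trace_nonneg

theorem exists_mem_unitaryGroup_mul_posSemidef_of_isUnit [DecidableEq n] {B : Matrix n n 𝕜}
    (hB : IsUnit B) : ∃ U ∈ unitaryGroup n 𝕜, (B * U).PosSemidef := by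
  obtain ⟨u, rfl⟩ := hB
  set C := CFC.sqrt ((u : Matrix n n 𝕜) * star (u : Matrix n n 𝕜))
  have hC : C.PosSemidef := (CFC.sqrt_nonneg _).posSemidef
  have hCC : C * C = u * star (u : Matrix n n 𝕜) :=
    CFC.sqrt_mul_sqrt_self _ (posSemidef_self_mul_conjTranspose _).nonneg
  refine ⟨(↑u⁻¹ : Matrix n n 𝕜) * C, ?_, by rwa [Units.mul_inv_cancel_left]⟩
  rw [mem_unitaryGroup_iff, star_mul, hC.isHermitian.star_eq, Matrix.mul_assoc,
    ← Matrix.mul_assoc C C, hCC, Matrix.mul_assoc, Units.inv_mul_cancel_left, ← star_mul,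
    Units.inv_mul, star_one]

-- The `t` for which `B + t` has a polar decomposition form a closed set (the unitary group is
-- compact) containing the dense set of `t` where `B + t` is invertible.
theorem exists_mem_unitaryGroup_mul_posSemidef [DecidableEq n] (B : Matrix n n 𝕜) :
    ∃ U ∈ unitaryGroup n 𝕜, (B * U).PosSemidef := by
  set A := {t : 𝕜 | ∃ U ∈ unitaryGroup n 𝕜, ((algebraMap 𝕜 _ t + B) * U).PosSemidef}
  have : CompactSpace (unitaryGroup n 𝕜) := isCompact_iff_compactSpace.mp isCompact_unitaryGroup
  have hA_closed : IsClosed A := by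
    have hS : IsClosed
        {p : 𝕜 × unitaryGroup n 𝕜 | ((algebraMap 𝕜 _ p.1 + B) * p.2).PosSemidef} :=
      isClosed_setOf_posSemidef.preimage (by fun_prop)
    convert isClosedMap_fst_of_compactSpace _ hS using 1
    ext t
    simp [A]
  have hA_dense : Dense A := by
    refine ((finite_spectrum (-B)).countable.dense_compl 𝕜).mono fun t ht => ?_
    rw [Set.mem_compl_iff, spectrum.notMem_iff, sub_neg_eq_add] at ht
    exact exists_mem_unitaryGroup_mul_posSemidef_of_isUnit ht
  have h0 : (0 : 𝕜) ∈ A := by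
    rw [← hA_closed.closure_eq, hA_dense.closure_eq]
    trivial
  simpa [A] using h0

end RCLike

section Real

variable {m n : Type*} [Fintype m] [Fintype n]

theorem trace_transpose_mul_self_nonneg (A : Matrix m n ℝ) : 0 ≤ (Aᵀ * A).trace := by
  simpa using (posSemidef_conjTranspose_mul_self A).trace_nonneg

theorem posSemidef_transpose_mul_self_sub_smul_one [DecidableEq n] {Z : Matrix m n ℝ} {c : ℝ}
    (h : ∀ v : n → ℝ, c * ∑ i, v i ^ 2 ≤ ∑ i, (Z *ᵥ v) i ^ 2) : (Zᵀ * Z - c • 1).PosSemidef := by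
  refine .of_dotProduct_mulVec_nonneg ?_ fun v => ?_
  · simp [IsHermitian, conjTranspose_eq_transpose_of_trivial, transpose_sub]
  · rw [star_trivial, sub_mulVec, ← mulVec_mulVec, dotProduct_sub, dotProduct_mulVec,
      vecMul_transpose, smul_mulVec, one_mulVec, dotProduct_smul, smul_eq_mul, sub_nonneg]
    simpa [dotProduct, sq] using h v

theorem IsSymm.trace_sq_add_smul_nonneg {P S : Matrix n n ℝ} (hP : P.IsSymm) (hS : S.IsSymm)
    (c : ℝ) : 0 ≤ (P * P).trace + 2 * c * (S * P).trace + c ^ 2 * (S * S).trace := by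
  have h := trace_transpose_mul_self_nonneg (P + c • S)
  rw [transpose_add, transpose_smul, hP.eq, hS.eq] at h
  simp only [add_mul, mul_add, Matrix.smul_mul, Matrix.mul_smul, trace_add, trace_smul,
    smul_eq_mul] at h
  rw [trace_mul_comm P S] at h
  linarith

theorem trace_transpose_mul_gram_sub (M Δ : Matrix m n ℝ) (hS : (Mᵀ * Δ).IsSymm) :
    ((M * Mᵀ - (M + Δ) * (M + Δ)ᵀ)ᵀ * (M * Mᵀ - (M + Δ) * (M + Δ)ᵀ)).trace =
      (Δᵀ * Δ * (Δᵀ * Δ)).trace + 2 * (Mᵀ * M * (Δᵀ * Δ)).trace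
        + 2 * (Mᵀ * Δ * (Mᵀ * Δ)).trace + 4 * (Mᵀ * Δ * (Δᵀ * Δ)).trace := by
  have hE : M * Mᵀ - (M + Δ) * (M + Δ)ᵀ = -(Δ * Δᵀ + Δ * Mᵀ + M * Δᵀ) := by
    simp only [transpose_add, Matrix.add_mul, Matrix.mul_add]
    abel
  have hcycle : ∀ X Y Z W : Matrix m n ℝ,
      ((X * Yᵀ)ᵀ * (Z * Wᵀ)).trace = (Xᵀ * Z * (Wᵀ * Y)).trace := by
    intro X Y Z W
    rw [transpose_mul, transpose_transpose, Matrix.mul_assoc, trace_mul_comm, Matrix.mul_assoc,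
      Matrix.mul_assoc, Matrix.mul_assoc]
  have hS' : Δᵀ * M = Mᵀ * Δ := by rw [← hS.eq, transpose_mul, transpose_transpose]
  rw [hE, transpose_neg, Matrix.neg_mul, Matrix.mul_neg, neg_neg]
  simp only [transpose_add, Matrix.add_mul, Matrix.mul_add, trace_add, hcycle, hS']
  rw [trace_mul_comm (Δᵀ * Δ) (Mᵀ * Δ), trace_mul_comm (Δᵀ * Δ) (Mᵀ * M)]
  ring

theorem trace_gram_sub_sq_ge_of_posSemidef [DecidableEq n] (M N : Matrix m n ℝ) {σ : ℝ}
    (hM : (Mᵀ * M - σ ^ 2 • 1).PosSemidef) (hMN : (Mᵀ * N).PosSemidef) :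
    2 * (√2 - 1) * σ ^ 2 * ((M - N)ᵀ * (M - N)).trace ≤
      ((M * Mᵀ - N * Nᵀ)ᵀ * (M * Mᵀ - N * Nᵀ)).trace := by
  obtain ⟨Δ, rfl⟩ : ∃ Δ, N = M + Δ := ⟨N - M, by abel⟩
  have hQ : (Mᵀ * M).IsSymm := by rw [IsSymm, transpose_mul, transpose_transpose]
  have hP : (Δᵀ * Δ).IsSymm := by rw [IsSymm, transpose_mul, transpose_transpose]
  have hS : (Mᵀ * Δ).IsSymm := by
    have hQS : (Mᵀ * M + Mᵀ * Δ).IsSymm := by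
      rw [← Matrix.mul_add, IsSymm, ← conjTranspose_eq_transpose_of_trivial]
      exact hMN.isHermitian
    simpa using hQS.sub hQ
  have hP_psd : (Δᵀ * Δ).PosSemidef := by simpa using posSemidef_conjTranspose_mul_self Δ
  have hQP := hM.trace_mul_nonneg hP_psd
  have hNP := hMN.trace_mul_nonneg hP_psd
  have hsq := hP.trace_sq_add_smul_nonneg hS √2
  rw [Matrix.sub_mul, trace_sub, smul_mul, trace_smul, Matrix.one_mul, smul_eq_mul] at hQP
  rw [Matrix.mul_add, Matrix.add_mul, trace_add] at hNP
  rw [trace_transpose_mul_gram_sub M Δ hS, show M - (M + Δ) = -Δ by abel, transpose_neg,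
    Matrix.neg_mul, Matrix.mul_neg, neg_neg]
  rw [Real.sq_sqrt zero_le_two] at hsq
  have h1 : 0 ≤ √2 - 1 := by linarith [Real.one_lt_sqrt_two]
  have h2 : 0 ≤ 2 - √2 := by linarith [Real.sqrt_two_lt_three_halves]
  linarith [mul_nonneg h2 hNP, mul_nonneg h1 hQP]

end Real

end Matrix

theorem frobSq_eq_trace {m n : ℕ} (M : Matrix (Fin m) (Fin n) ℝ) :
    frobSq M = (Mᵀ * M).trace := by
  simp only [frobSq, trace, diag_apply, mul_apply, transpose_apply, sq]
  exact Finset.sum_comm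

/-- Procrustes distance bound (Tu et al.): if `σ > 0` is (a lower bound for) the
smallest singular value of `Z₁`, i.e. `σ² ‖v‖² ≤ ‖Z₁ v‖²` for all `v`, then
`min_{R ∈ O(k)} ‖Z₁ - Z₂ R‖_F² ≤ ‖Z₁Z₁ᵀ - Z₂Z₂ᵀ‖_F² / (2(√2 - 1) σ²)`. -/
theorem procrustes_dist_le_gram_diff {n k : ℕ}
    (Z₁ Z₂ : Matrix (Fin n) (Fin k) ℝ) (σ : ℝ) (hσ : 0 < σ)
    (hσk : ∀ v : Fin k → ℝ, σ ^ 2 * (∑ i, (v i) ^ 2) ≤ ∑ i, (Z₁.mulVec v i) ^ 2) :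
    ∃ R ∈ Matrix.orthogonalGroup (Fin k) ℝ,
      frobSq (Z₁ - Z₂ * R) ≤
        (1 / (2 * (Real.sqrt 2 - 1) * σ ^ 2)) * frobSq (Z₁ * Z₁ᵀ - Z₂ * Z₂ᵀ) := by
  obtain ⟨R, hR, hpsd⟩ := exists_mem_unitaryGroup_mul_posSemidef (Z₁ᵀ * Z₂)
  refine ⟨R, hR, ?_⟩
  have hgram : Z₂ * R * (Z₂ * R)ᵀ = Z₂ * Z₂ᵀ := by
    rw [transpose_mul, Matrix.mul_assoc, ← Matrix.mul_assoc R,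
      (mem_orthogonalGroup_iff _ _).mp hR, Matrix.one_mul]
  have hbound := trace_gram_sub_sq_ge_of_posSemidef Z₁ (Z₂ * R)
    (posSemidef_transpose_mul_self_sub_smul_one hσk) (by rwa [← Matrix.mul_assoc])
  rw [hgram] at hbound
  have hc : 0 < 2 * (√2 - 1) * σ ^ 2 := by
    have := sub_pos.mpr Real.one_lt_sqrt_two
    positivity
  rw [frobSq_eq_trace, frobSq_eq_trace, one_div_mul_eq_div, le_div_iff₀ hc]
  linarith
end

section
/- For any Z₁, Z₂ ∈ R^{n×k} with dist(Z₁, Z₂) = min_{R ∈ O(k)} ‖Z₁ - Z₂ R‖_F ≤ c·‖Z₁‖_op for some c ≥ 0, it holds that ‖Z₁ Z₁^T - Z₂ Z₂^T‖_F ≤ (2 + c)·‖Z₁‖_op · dist(Z₁, Z₂). -/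
open Matrix

/-- Frobenius norm of a real matrix. -/
noncomputable def frob {m n : ℕ} (M : Matrix (Fin m) (Fin n) ℝ) : ℝ :=
  Real.sqrt (frobSq M)

/-- Operator (spectral) norm of a real matrix, as the norm of the induced linear
map between Euclidean spaces. -/
noncomputable def matOpNorm {m n : ℕ} (M : Matrix (Fin m) (Fin n) ℝ) : ℝ :=
  ‖LinearMap.toContinuousLinearMap (Matrix.toEuclideanLin M)‖

lemma frobSq_nonneg {m n : ℕ} (M : Matrix (Fin m) (Fin n) ℝ) : 0 ≤ frobSq M :=
  Finset.sum_nonneg fun _ _ => Finset.sum_nonneg fun _ _ => sq_nonneg _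

lemma frob_nonneg {m n : ℕ} (M : Matrix (Fin m) (Fin n) ℝ) : 0 ≤ frob M :=
  Real.sqrt_nonneg _

lemma frob_sq {m n : ℕ} (M : Matrix (Fin m) (Fin n) ℝ) : (frob M) ^ 2 = frobSq M :=
  Real.sq_sqrt (frobSq_nonneg M)

lemma frob_transpose {m n : ℕ} (M : Matrix (Fin m) (Fin n) ℝ) : frob Mᵀ = frob M := by
  unfold frob frobSq
  rw [Finset.sum_comm]
  rfl

/-- frob as a norm on EuclideanSpace over the product index. -/
lemma frob_eq_norm {m n : ℕ} (M : Matrix (Fin m) (Fin n) ℝ) :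
    frob M = ‖(WithLp.equiv 2 (Fin m × Fin n → ℝ)).symm (fun p => M p.1 p.2)‖ := by
  rw [EuclideanSpace.norm_eq]
  unfold frob frobSq
  rw [Fintype.sum_prod_type]
  simp [sq_abs]

lemma frob_add_le {m n : ℕ} (A B : Matrix (Fin m) (Fin n) ℝ) :
    frob (A + B) ≤ frob A + frob B := by
  rw [frob_eq_norm, frob_eq_norm, frob_eq_norm]
  have : ((WithLp.equiv 2 (Fin m × Fin n → ℝ)).symm (fun p => (A + B) p.1 p.2)) =
      (WithLp.equiv 2 (Fin m × Fin n → ℝ)).symm (fun p => A p.1 p.2) +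
      (WithLp.equiv 2 (Fin m × Fin n → ℝ)).symm (fun p => B p.1 p.2) := by
    ext p; simp [Matrix.add_apply]
  rw [this]
  exact norm_add_le _ _

lemma norm_mulVec_le {m n : ℕ} (M : Matrix (Fin m) (Fin n) ℝ) (x : Fin n → ℝ) :
    Real.sqrt (∑ i, (M.mulVec x i) ^ 2) ≤ matOpNorm M * Real.sqrt (∑ j, (x j) ^ 2) := by
  have h := (LinearMap.toContinuousLinearMap (Matrix.toEuclideanLin M)).le_opNorm
      ((WithLp.equiv 2 (Fin n → ℝ)).symm x)
  have e1 : ‖LinearMap.toContinuousLinearMap (Matrix.toEuclideanLin M)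
      ((WithLp.equiv 2 (Fin n → ℝ)).symm x)‖ = Real.sqrt (∑ i, (M.mulVec x i) ^ 2) := by
    rw [show (LinearMap.toContinuousLinearMap (Matrix.toEuclideanLin M))
        ((WithLp.equiv 2 (Fin n → ℝ)).symm x) =
        (WithLp.equiv 2 (Fin m → ℝ)).symm (M.mulVec x) from rfl]
    rw [EuclideanSpace.norm_eq]
    simp [sq_abs]
  have e2 : ‖(WithLp.equiv 2 (Fin n → ℝ)).symm x‖ = Real.sqrt (∑ j, (x j) ^ 2) := by
    rw [EuclideanSpace.norm_eq]; simp [sq_abs]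
  rw [e1, e2] at h
  exact h

lemma frob_mul_le {m n p : ℕ} (A : Matrix (Fin m) (Fin n) ℝ) (B : Matrix (Fin n) (Fin p) ℝ) :
    frob (A * B) ≤ matOpNorm A * frob B := by
  have hA : 0 ≤ matOpNorm A := norm_nonneg _
  have key : frobSq (A * B) ≤ (matOpNorm A) ^ 2 * frobSq B := by
    unfold frobSq
    rw [Finset.sum_comm]
    have : ∀ j : Fin p, ∑ i, ((A * B) i j) ^ 2 ≤ (matOpNorm A) ^ 2 * ∑ l, (B l j) ^ 2 := by
      intro j
      have h := norm_mulVec_le A (fun l => B l j)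
      have h1 : ∀ i, (A * B) i j = A.mulVec (fun l => B l j) i := by
        intro i; simp [Matrix.mul_apply, Matrix.mulVec, dotProduct]
      have h2 : Real.sqrt (∑ i, ((A * B) i j) ^ 2)
          ≤ matOpNorm A * Real.sqrt (∑ l, (B l j) ^ 2) := by
        simpa only [h1] using h
      have := Real.sqrt_le_sqrt (le_of_eq (rfl : (∑ i, ((A * B) i j) ^ 2) = _))
      calc ∑ i, ((A * B) i j) ^ 2
          = (Real.sqrt (∑ i, ((A * B) i j) ^ 2)) ^ 2 := by
            rw [Real.sq_sqrt (Finset.sum_nonneg fun _ _ => sq_nonneg _)]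
        _ ≤ (matOpNorm A * Real.sqrt (∑ l, (B l j) ^ 2)) ^ 2 := by
            apply pow_le_pow_left₀ (Real.sqrt_nonneg _) h2
        _ = (matOpNorm A) ^ 2 * ∑ l, (B l j) ^ 2 := by
            rw [mul_pow, Real.sq_sqrt (Finset.sum_nonneg fun _ _ => sq_nonneg _)]
    calc ∑ j, ∑ i, ((A * B) i j) ^ 2 ≤ ∑ j, (matOpNorm A) ^ 2 * ∑ l, (B l j) ^ 2 :=
          Finset.sum_le_sum fun j _ => this j
      _ = (matOpNorm A) ^ 2 * frobSq B := by
          rw [← Finset.mul_sum]; unfold frobSq; rw [Finset.sum_comm]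
  unfold frob
  calc Real.sqrt (frobSq (A * B)) ≤ Real.sqrt ((matOpNorm A) ^ 2 * frobSq B) :=
        Real.sqrt_le_sqrt key
    _ = matOpNorm A * Real.sqrt (frobSq B) := by
        rw [Real.sqrt_mul (sq_nonneg _), Real.sqrt_sq hA]

lemma matOpNorm_le_frob {m n : ℕ} (M : Matrix (Fin m) (Fin n) ℝ) :
    matOpNorm M ≤ frob M := by
  apply ContinuousLinearMap.opNorm_le_bound _ (frob_nonneg M)
  intro x
  have e1 : ‖LinearMap.toContinuousLinearMap (Matrix.toEuclideanLin M) x‖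
      = Real.sqrt (∑ i, (M.mulVec (WithLp.equiv 2 (Fin n → ℝ) x) i) ^ 2) := by
    rw [EuclideanSpace.norm_eq]; simp only [Real.norm_eq_abs, sq_abs]; rfl
  have e2 : ‖x‖ = Real.sqrt (∑ j, ((WithLp.equiv 2 (Fin n → ℝ) x) j) ^ 2) := by
    rw [EuclideanSpace.norm_eq]; simp only [Real.norm_eq_abs, sq_abs]; rfl
  set y := WithLp.equiv 2 (Fin n → ℝ) x with hy
  rw [e1, e2]
  unfold frob
  rw [← Real.sqrt_mul (frobSq_nonneg M)]
  · apply Real.sqrt_le_sqrt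
    have : ∀ i : Fin m, (M.mulVec y i) ^ 2 ≤ (∑ j, (M i j) ^ 2) * ∑ j, (y j) ^ 2 := by
      intro i
      have h2 : (∑ j, M i j * y j) ^ 2 ≤ (∑ j, (M i j) ^ 2) * ∑ j, (y j) ^ 2 :=
        Finset.sum_mul_sq_le_sq_mul_sq _ _ _
      simpa [Matrix.mulVec, dotProduct] using h2
    calc ∑ i, (M.mulVec y i) ^ 2 ≤ ∑ i, (∑ j, (M i j) ^ 2) * ∑ j, (y j) ^ 2 :=
          Finset.sum_le_sum fun i _ => this i
      _ = frobSq M * ∑ j, (y j) ^ 2 := by rw [← Finset.sum_mul]; rfl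

/-- Core per-R bound. -/
lemma gram_bound {n k : ℕ} (Z₁ Z₂ : Matrix (Fin n) (Fin k) ℝ)
    (R : Matrix (Fin k) (Fin k) ℝ) (hR : R ∈ Matrix.orthogonalGroup (Fin k) ℝ) :
    frob (Z₁ * Z₁ᵀ - Z₂ * Z₂ᵀ) ≤
      2 * matOpNorm Z₁ * frob (Z₁ - Z₂ * R) + (frob (Z₁ - Z₂ * R)) ^ 2 := by
  set W := Z₂ * R with hW
  set Δ := Z₁ - W with hΔ
  have hRR : R * Rᵀ = 1 := by
    have := (Matrix.mem_orthogonalGroup_iff (Fin k) ℝ).mp hR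
    simpa [Matrix.star_eq_conjTranspose] using this
  have hWW : W * Wᵀ = Z₂ * Z₂ᵀ := by
    rw [hW, Matrix.transpose_mul, Matrix.mul_assoc, ← Matrix.mul_assoc R, hRR, Matrix.one_mul]
  have key : Z₁ * Z₁ᵀ - Z₂ * Z₂ᵀ = Δ * Z₁ᵀ + (Z₁ * Δᵀ + -(Δ * Δᵀ)) := by
    rw [← hWW, hΔ]
    simp only [Matrix.transpose_sub, Matrix.sub_mul, Matrix.mul_sub]
    abel
  rw [key]
  have t1 : frob (Δ * Z₁ᵀ) ≤ matOpNorm Z₁ * frob Δ := by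
    rw [← frob_transpose (Δ * Z₁ᵀ), Matrix.transpose_mul, Matrix.transpose_transpose]
    calc frob (Z₁ * Δᵀ) ≤ matOpNorm Z₁ * frob Δᵀ := frob_mul_le _ _
      _ = matOpNorm Z₁ * frob Δ := by rw [frob_transpose]
  have t2 : frob (Z₁ * Δᵀ) ≤ matOpNorm Z₁ * frob Δ := by
    calc frob (Z₁ * Δᵀ) ≤ matOpNorm Z₁ * frob Δᵀ := frob_mul_le _ _
      _ = matOpNorm Z₁ * frob Δ := by rw [frob_transpose]
  have t3 : frob (-(Δ * Δᵀ)) ≤ (frob Δ) ^ 2 := by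
    have hneg : frob (-(Δ * Δᵀ)) = frob (Δ * Δᵀ) := by
      unfold frob frobSq; simp
    rw [hneg]
    calc frob (Δ * Δᵀ) ≤ matOpNorm Δ * frob Δᵀ := frob_mul_le _ _
      _ ≤ frob Δ * frob Δ := by
          apply mul_le_mul (matOpNorm_le_frob Δ) (le_of_eq (frob_transpose Δ))
            (frob_nonneg _) (frob_nonneg _)
      _ = (frob Δ) ^ 2 := (sq (frob Δ)).symm
  calc frob (Δ * Z₁ᵀ + (Z₁ * Δᵀ + -(Δ * Δᵀ)))
      ≤ frob (Δ * Z₁ᵀ) + frob (Z₁ * Δᵀ + -(Δ * Δᵀ)) := frob_add_le _ _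
    _ ≤ frob (Δ * Z₁ᵀ) + (frob (Z₁ * Δᵀ) + frob (-(Δ * Δᵀ))) := by
        linarith [frob_add_le (Z₁ * Δᵀ) (-(Δ * Δᵀ))]
    _ ≤ matOpNorm Z₁ * frob Δ + (matOpNorm Z₁ * frob Δ + (frob Δ) ^ 2) := by
        linarith
    _ = 2 * matOpNorm Z₁ * frob Δ + (frob Δ) ^ 2 := by ring

/-- (Tu et al.) If `dist(Z₁, Z₂) = min_{R ∈ O(k)} ‖Z₁ - Z₂R‖_F ≤ c ‖Z₁‖_op`, then
`‖Z₁Z₁ᵀ - Z₂Z₂ᵀ‖_F ≤ (2 + c) ‖Z₁‖_op · dist(Z₁, Z₂)`. -/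
theorem gram_diff_le_procrustes_dist {n k : ℕ}
    (Z₁ Z₂ : Matrix (Fin n) (Fin k) ℝ) (c : ℝ) (hc : 0 ≤ c)
    (d : ℝ)
    (hd : d = sInf {r : ℝ | ∃ R ∈ Matrix.orthogonalGroup (Fin k) ℝ, r = frob (Z₁ - Z₂ * R)})
    (hdc : d ≤ c * matOpNorm Z₁) :
    frob (Z₁ * Z₁ᵀ - Z₂ * Z₂ᵀ) ≤ (2 + c) * matOpNorm Z₁ * d := by
  set S := {r : ℝ | ∃ R ∈ Matrix.orthogonalGroup (Fin k) ℝ, r = frob (Z₁ - Z₂ * R)} with hS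
  have hne : S.Nonempty := ⟨frob (Z₁ - Z₂ * 1), 1, Submonoid.one_mem _, rfl⟩
  have hbdd : ∀ r ∈ S, (0:ℝ) ≤ r := by
    rintro r ⟨R, _, rfl⟩; exact frob_nonneg _
  have hd0 : 0 ≤ d := hd ▸ le_csInf hne hbdd
  have hop : 0 ≤ matOpNorm Z₁ := norm_nonneg _
  -- for every ε > 0, get bound with d + ε
  have main : ∀ ε > 0, frob (Z₁ * Z₁ᵀ - Z₂ * Z₂ᵀ)
      ≤ 2 * matOpNorm Z₁ * (d + ε) + (d + ε) ^ 2 := by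
    intro ε hε
    obtain ⟨r, hrS, hr⟩ := Real.lt_sInf_add_pos hne hε
    obtain ⟨R, hR, rfl⟩ := hrS
    rw [← hd] at hr
    have hb := gram_bound Z₁ Z₂ R hR
    have h0 : 0 ≤ frob (Z₁ - Z₂ * R) := frob_nonneg _
    nlinarith [sq_nonneg (frob (Z₁ - Z₂ * R))]
  have lim : frob (Z₁ * Z₁ᵀ - Z₂ * Z₂ᵀ) ≤ 2 * matOpNorm Z₁ * d + d ^ 2 := by
    by_contra h
    push_neg at h
    set L := frob (Z₁ * Z₁ᵀ - Z₂ * Z₂ᵀ)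
    have hcont : Filter.Tendsto (fun ε : ℝ => 2 * matOpNorm Z₁ * (d + ε) + (d + ε) ^ 2)
        (nhdsWithin 0 (Set.Ioi 0)) (nhds (2 * matOpNorm Z₁ * d + d ^ 2)) := by
      have hc2 : Continuous (fun ε : ℝ => 2 * matOpNorm Z₁ * (d + ε) + (d + ε) ^ 2) := by
        continuity
      have := (hc2.tendsto 0).mono_left (nhdsWithin_le_nhds (s := Set.Ioi 0))
      simpa using this
    have hle : 2 * matOpNorm Z₁ * d + d ^ 2 < L := h
    have := ge_of_tendsto hcont (by
      filter_upwards [self_mem_nhdsWithin] with ε hε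
      exact main ε hε)
    linarith
  calc frob (Z₁ * Z₁ᵀ - Z₂ * Z₂ᵀ) ≤ 2 * matOpNorm Z₁ * d + d ^ 2 := lim
    _ ≤ 2 * matOpNorm Z₁ * d + (c * matOpNorm Z₁) * d := by
        nlinarith
    _ = (2 + c) * matOpNorm Z₁ * d := by ring
end

section
/- Let Z^t, Z_⋆ ∈ R^{n×k}, and R^t = argmin_{R ∈ O(k)} ‖Z^t - Z_⋆ R‖_F. Then for any symmetric matrix N ∈ R^{n×n}: ⟨N, (Z^t - Z_⋆ R^t)(Z^t)^T⟩ = (1/2)⟨N, Z^t(Z^t)^T - Z_⋆ Z_⋆^T⟩ + (1/2)⟨N, Δ Δ^T⟩, where Δ = Z^t - Z_⋆ R^t. -/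
open Matrix

/-- Symmetrization identity: for `N` symmetric and
`R = argmin_{R ∈ O(k)} ‖Z - Z⋆ R‖_F`, writing `Δ = Z - Z⋆ R`,
`⟨N, Δ Zᵀ⟩ = ½⟨N, ZZᵀ - Z⋆Z⋆ᵀ⟩ + ½⟨N, ΔΔᵀ⟩` in the trace inner product. -/
theorem symmetrized_cross_term_identity {n k : ℕ}
    (N : Matrix (Fin n) (Fin n) ℝ) (hN : N.IsSymm)
    (Z Zs : Matrix (Fin n) (Fin k) ℝ)
    (R : Matrix (Fin k) (Fin k) ℝ)
    (hRmem : R ∈ Matrix.orthogonalGroup (Fin k) ℝ)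
    (hRmin : ∀ R' ∈ Matrix.orthogonalGroup (Fin k) ℝ,
      frobSq (Z - Zs * R) ≤ frobSq (Z - Zs * R')) :
    Matrix.trace (Nᵀ * ((Z - Zs * R) * Zᵀ)) =
      (1 / 2) * Matrix.trace (Nᵀ * (Z * Zᵀ - Zs * Zsᵀ)) +
      (1 / 2) * Matrix.trace (Nᵀ * ((Z - Zs * R) * (Z - Zs * R)ᵀ)) := by
  have hR : R * Rᵀ = 1 := by
    have := (Matrix.mem_unitaryGroup_iff.mp hRmem)
    simpa [Matrix.star_eq_conjTranspose] using this
  have h1 : (Zs * R) * (Zs * R)ᵀ = Zs * Zsᵀ := by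
    rw [transpose_mul, Matrix.mul_assoc, ← Matrix.mul_assoc R, hR, Matrix.one_mul]
  have hsym : ∀ A : Matrix (Fin n) (Fin n) ℝ,
      Matrix.trace (Nᵀ * A) = Matrix.trace (Nᵀ * Aᵀ) := by
    intro A
    have h2 : Nᵀ * Aᵀ = (A * N)ᵀ := by rw [transpose_mul]
    rw [h2, Matrix.trace_transpose, Matrix.trace_mul_comm, hN.eq]
  have hkey : Matrix.trace (Nᵀ * (Zs * R * Zᵀ)) =
      Matrix.trace (Nᵀ * (Z * (Zs * R)ᵀ)) := by
    rw [hsym (Zs * R * Zᵀ), transpose_mul, transpose_transpose]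
  have expand : (Z - Zs * R) * (Z - Zs * R)ᵀ
      = Z * Zᵀ - (Zs * R) * Zᵀ - Z * (Zs * R)ᵀ + Zs * Zsᵀ := by
    rw [← h1, transpose_sub, Matrix.sub_mul, Matrix.mul_sub, Matrix.mul_sub]
    abel
  rw [expand, Matrix.sub_mul]
  simp only [Matrix.mul_sub, Matrix.mul_add, trace_sub, trace_add]
  rw [hkey]
  ring
end
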